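/- In the setting of the previous statement, if additionally κ(g_i, g_j) = 0 whenever i + j ≠ 0, then the alternating form κ_{-1}(S,T) = κ(X,[S,T]) on g_{-1} is nondegenerate. -/
import Mathlib
open LieModule
set_option linter.unusedSectionVars false
section
variable {F L : Type*} [Field F] [CharZero F] [LieRing L] [LieAlgebra F L] [Module.Finite F L]
variable {x h y : L}

lemma pow_y_succ (a : L) (k : ℕ) :
    ((toEnd F L L y)^(k+1)) a = ⁅y, ((toEnd F L L y)^k) a⁆ := by
  rw [pow_succ', Module.End.mul_apply, toEnd_apply_apply]

lemma lie_h_lie_y (hy : ⁅h, y⁆ = (-2 : F) • y) (a : L) :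
    ⁅h, ⁅y, a⁆⁆ = ⁅y, ⁅h, a⁆⁆ - (2:F) • ⁅y, a⁆ := by
  rw [leibniz_lie, hy]
  simp only [neg_smul, smul_lie, neg_lie]
  abel

lemma lie_x_lie_y (hxy : ⁅x, y⁆ = h) (a : L) :
    ⁅x, ⁅y, a⁆⁆ = ⁅y, ⁅x, a⁆⁆ + ⁅h, a⁆ := by
  rw [leibniz_lie, hxy]
  abel

lemma lie_h_pow_y (hy : ⁅h, y⁆ = (-2 : F) • y) {z : L} {lam : F}
    (hz : ⁅h, z⁆ = lam • z) (k : ℕ) :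
    ⁅h, ((toEnd F L L y)^k) z⁆ = (lam - 2*k) • ((toEnd F L L y)^k) z := by
  induction k with
  | zero => simpa using hz
  | succ k ih =>
    rw [pow_y_succ, lie_h_lie_y hy, ih, lie_smul, ← pow_y_succ]
    push_cast
    match_scalars <;> ring

lemma lie_h_pow_y' (hy : ⁅h, y⁆ = (-2 : F) • y) {u v : L} {lam : F}
    (hu : ⁅h, u⁆ = lam • u + v) (k : ℕ) :
    ⁅h, ((toEnd F L L y)^k) u⁆ =
      (lam - 2*k) • ((toEnd F L L y)^k) u + ((toEnd F L L y)^k) v := by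
  induction k with
  | zero => simpa using hu
  | succ k ih =>
    rw [pow_y_succ, lie_h_lie_y hy, ih, lie_add, lie_smul, ← pow_y_succ, ← pow_y_succ]
    push_cast
    match_scalars <;> ring

lemma lie_x_pow_y (hy : ⁅h, y⁆ = (-2 : F) • y) (hxy : ⁅x, y⁆ = h) {z z' : L} {lam : F}
    (hz : ⁅h, z⁆ = lam • z) (hz' : ⁅x, z⁆ = z') (m : ℕ) :
    ⁅x, ((toEnd F L L y)^(m+1)) z⁆ =
      ((toEnd F L L y)^(m+1)) z' + (((m:F)+1) * (lam - m)) • ((toEnd F L L y)^m) z := by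
  induction m with
  | zero =>
    rw [pow_y_succ]
    rw [lie_x_lie_y hxy]
    simp only [pow_zero, Module.End.one_apply] at *
    rw [hz, hz', pow_y_succ]
    simp
  | succ m ih =>
    rw [pow_y_succ, lie_x_lie_y hxy, ih, lie_add, lie_smul, lie_h_pow_y hy hz,
      ← pow_y_succ, ← pow_y_succ]
    push_cast
    match_scalars <;> ring
-- E acting on Y^m of a height-2 generalized eigenvector killed by x
lemma lie_x_pow_y' (hy : ⁅h, y⁆ = (-2 : F) • y) (hxy : ⁅x, y⁆ = h) {u v : L} {lam : F}
    (hu : ⁅h, u⁆ = lam • u + v) (hxu : ⁅x, u⁆ = 0) (k : ℕ) :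
    ⁅x, ((toEnd F L L y)^(k+1)) u⁆ =
      (((k:F)+1) * (lam - k)) • ((toEnd F L L y)^k) u
        + ((k:F)+1) • ((toEnd F L L y)^k) v := by
  induction k with
  | zero =>
    rw [pow_y_succ, lie_x_lie_y hxy]
    simp only [pow_zero, Module.End.one_apply]
    rw [hxu, hu]
    simp
  | succ k ih =>
    rw [pow_y_succ, lie_x_lie_y hxy, ih, lie_add, lie_smul, lie_smul,
      lie_h_pow_y' hy hu, ← pow_y_succ, ← pow_y_succ]
    push_cast
    match_scalars <;> ring

lemma eigen_chain_eventually_zero (g : Module.End F L) (c : ℕ → F) (hc : Function.Injective c)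
    (z : ℕ → L) (hz : ∀ k, g (z k) = c k • z k) : ∃ k, z k = 0 := by
  by_contra hcon
  push_neg at hcon
  have hinf : (Set.range c).Infinite := Set.infinite_range_of_injective hc
  refine hinf ?_
  have := g.eigenvectors_linearIndependent (Set.range c)
    (fun μ ↦ z (Classical.choose μ.2)) (fun μ ↦ ?_)
  · exact this.finite
  · have hspec : c (Classical.choose μ.2) = μ := Classical.choose_spec μ.2
    constructor
    · rw [Module.End.mem_eigenspace_iff, hz, hspec]
    · exact hcon _

lemma no_gen_primitive (hy : ⁅h, y⁆ = (-2 : F) • y) (hxy : ⁅x, y⁆ = h)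
    (t : IsSl2Triple h x y) (n : ℕ) {v u : L}
    (hP : t.HasPrimitiveVectorWith v ((n:ℕ) : F))
    (hu : ⁅h, u⁆ = ((n:ℕ) : F) • u + v) (hxu : ⁅x, u⁆ = 0) : False := by
  classical
  have hψzero : ((toEnd F L L y)^(n+1)) v = 0 := hP.pow_toEnd_f_eq_zero_of_eq_nat rfl
  have hψne : ∀ i, i ≤ n → ((toEnd F L L y)^i) v ≠ 0 :=
    fun i hi ↦ hP.pow_toEnd_f_ne_zero_of_eq_nat rfl hi
  have hψhigh : ∀ j, n+1 ≤ j → ((toEnd F L L y)^j) v = 0 := by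
    intro j hj
    obtain ⟨d, rfl⟩ : ∃ d, j = d + (n+1) := ⟨j - (n+1), by omega⟩
    rw [pow_add, Module.End.mul_apply, hψzero, map_zero]
  have hXh : ∀ k : ℕ, ⁅h, ((toEnd F L L y)^k) u⁆ =
      (((n:ℕ):F) - 2*k) • ((toEnd F L L y)^k) u + ((toEnd F L L y)^k) v :=
    fun k ↦ lie_h_pow_y' hy hu k
  have hXe : ∀ k : ℕ, ⁅x, ((toEnd F L L y)^(k+1)) u⁆ =
      (((k:F)+1) * (((n:ℕ):F) - k)) • ((toEnd F L L y)^k) u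
        + ((k:F)+1) • ((toEnd F L L y)^k) v :=
    fun k ↦ lie_x_pow_y' hy hxy hu hxu k
  -- X (n+1) ≠ 0
  have hXn1 : ((toEnd F L L y)^(n+1)) u ≠ 0 := by
    intro h0
    have h1 := hXe n
    rw [h0, lie_zero] at h1
    have hc : (((n:F)+1) * (((n:ℕ):F) - (n:ℕ))) = 0 := by push_cast; ring
    rw [hc, zero_smul, zero_add] at h1
    have hne : ((n:F)+1) ≠ 0 := by
      have h2 : (((n+1 : ℕ)):F) ≠ 0 := Nat.cast_ne_zero.mpr (Nat.succ_ne_zero n)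
      push_cast at h2
      exact h2
    exact hψne n le_rfl ((smul_eq_zero.mp h1.symm).resolve_left hne)
  -- eventual vanishing of X
  have hvan' : ∃ m, ((toEnd F L L y)^m) u = 0 := by
    have hcinj : Function.Injective (fun k : ℕ ↦ ((n:ℕ):F) - 2*(((n+1+k : ℕ)):F)) := by
      intro a b hab
      simp only at hab
      have h2 : ((a:F)) = b := by push_cast at hab; linear_combination (-1/2 : F) * hab
      exact_mod_cast h2
    have heig : ∀ k : ℕ, (toEnd F L L h) (((toEnd F L L y)^(n+1+k)) u)
        = (((n:ℕ):F) - 2*(((n+1+k : ℕ)):F)) • ((toEnd F L L y)^(n+1+k)) u := by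
      intro k
      have h3 := hXh (n+1+k)
      rw [hψhigh (n+1+k) (by omega), add_zero] at h3
      rw [toEnd_apply_apply, h3]
    obtain ⟨k, hk⟩ := eigen_chain_eventually_zero _ _ hcinj _ heig
    exact ⟨n+1+k, hk⟩
  have hplarge : n+2 <= Nat.find hvan' := by
    by_contra hcon
    push_neg at hcon
    have hXmono : ∀ i j : ℕ, i ≤ j → ((toEnd F L L y)^i) u = 0 → ((toEnd F L L y)^j) u = 0 := by
      intro i j hij h0
      obtain ⟨d, rfl⟩ : ∃ d, j = d + i := ⟨j - i, by omega⟩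
      rw [pow_add, Module.End.mul_apply, h0, map_zero]
    exact hXn1 (hXmono (Nat.find hvan') (n+1) (by omega) (Nat.find_spec hvan'))
  obtain ⟨P, hPp⟩ : ∃ P, Nat.find hvan' = P + 1 := ⟨Nat.find hvan' - 1, by omega⟩
  have hXP : ((toEnd F L L y)^P) u ≠ 0 := Nat.find_min hvan' (by omega)
  have hXP1 : ((toEnd F L L y)^(P+1)) u = 0 := by rw [← hPp]; exact Nat.find_spec hvan'
  have hPn : n + 1 ≤ P := by omega
  have hψP : ((toEnd F L L y)^P) v = 0 := hψhigh P (by omega)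
  have hXPh : ⁅h, ((toEnd F L L y)^P) u⁆ = (((n:ℕ):F) - 2*(P:ℕ)) • ((toEnd F L L y)^P) u := by
    have h4 := hXh P; rwa [hψP, add_zero] at h4
  have P0 : (t.symm).HasPrimitiveVectorWith (((toEnd F L L y)^P) u) (((2*P - n : ℕ)):F) := by
    refine ⟨hXP, ?_, ?_⟩
    · rw [neg_lie, hXPh, Nat.cast_sub (by omega)]
      push_cast
      match_scalars <;> ring
    · show ⁅y, ((toEnd F L L y)^P) u⁆ = 0
      rw [← pow_y_succ]
      exact hXP1
  -- the span claim
  have hspan : ∀ k : ℕ, k ≤ P → ∃ a b : F,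
      ((toEnd F L L x)^k) (((toEnd F L L y)^P) u)
        = a • ((toEnd F L L y)^(P-k)) u + b • ((toEnd F L L y)^(P-k)) v := by
    intro k hk
    induction k with
    | zero => exact ⟨1, 0, by simp⟩
    | succ k ih =>
      obtain ⟨a, b, hab⟩ := ih (by omega)
      have hidx : P-k = (P-(k+1)) + 1 := by omega
      rw [pow_succ', Module.End.mul_apply, hab, hidx]
      rw [map_add, map_smul, map_smul, toEnd_apply_apply,
        lie_x_pow_y' hy hxy hu hxu, toEnd_apply_apply]
      have hψe2 := hP.lie_e_pow_succ_toEnd_f (P-(k+1))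
      rw [hψe2]
      refine ⟨a * ((((P-(k+1)):ℕ):F)+1) * (((n:ℕ):F) - ((P-(k+1)):ℕ)),
        a * ((((P-(k+1)):ℕ):F)+1) + b * ((((P-(k+1)):ℕ):F)+1) * (((n:ℕ):F) - ((P-(k+1)):ℕ)), ?_⟩
      match_scalars <;> push_cast <;> ring
  obtain ⟨a, b, hab⟩ := hspan P le_rfl
  have hzero : ((toEnd F L L x)^(P+1)) (((toEnd F L L y)^P) u) = 0 := by
    rw [pow_succ', Module.End.mul_apply, hab]
    simp only [Nat.sub_self, pow_zero, Module.End.one_apply]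
    rw [map_add, map_smul, map_smul, toEnd_apply_apply, toEnd_apply_apply, hxu, hP.lie_e]
    simp
  have hnonzero := P0.pow_toEnd_f_ne_zero_of_eq_nat rfl (show P+1 ≤ 2*P - n by omega)
  exact hnonzero hzero
/-- No Jordan blocks for `ad h` at eigenvalue `ν`. -/
def NoJordan (h : L) (ν : F) : Prop :=
  ∀ z : L, ⁅h, ⁅h, z⁆ - ν • z⁆ = ν • (⁅h, z⁆ - ν • z) → ⁅h, z⁆ = ν • z

lemma NJ_step (hy : ⁅h, y⁆ = (-2 : F) • y) (hxy : ⁅x, y⁆ = h) (hx : ⁅h, x⁆ = (2 : F) • x)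
    (t : IsSl2Triple h x y) (μ : F) (ih : NoJordan h (μ + 2)) : NoJordan h μ := by
  intro w hw
  by_contra hs0
  set s := ⁅h, w⁆ - μ • w with hs
  have hs_ne : s ≠ 0 := fun hc ↦ hs0 (by rw [← sub_eq_zero]; exact hc)
  have hs_eig : ⁅h, s⁆ = μ • s := hw
  -- x-bracket relations
  have key1 : ⁅h, ⁅x, w⁆⁆ - (μ + 2) • ⁅x, w⁆ = ⁅x, s⁆ := by
    rw [hs, lie_sub, lie_smul]
    rw [leibniz_lie x h w]
    have : ⁅x, h⁆ = -((2:F) • x) := by rw [← lie_skew, hx]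
    rw [this]
    simp only [neg_smul, neg_lie, smul_lie]
    module
  have key2 : ⁅h, ⁅x, s⁆⁆ = (μ + 2) • ⁅x, s⁆ := by
    rw [leibniz_lie h x s, hx, hs_eig, lie_smul, smul_lie]
    module
  have hEw : ⁅h, ⁅x, w⁆⁆ = (μ + 2) • ⁅x, w⁆ := by
    apply ih
    rw [key1]
    exact key2
  have hxs : ⁅x, s⁆ = 0 := by rw [← key1, hEw]; simp
  have prim : t.HasPrimitiveVectorWith s μ := ⟨hs_ne, hs_eig, hxs⟩
  obtain ⟨n, hn⟩ := prim.exists_nat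
  -- the ladder q j = (ad x)^(j+1) w of honest eigenvectors
  have hq_eig : ∀ j : ℕ, ⁅h, ((toEnd F L L x)^(j+1)) w⁆
      = (μ + 2*(((j+1 : ℕ)):F)) • ((toEnd F L L x)^(j+1)) w := by
    intro j
    induction j with
    | zero =>
      simpa using hEw
    | succ j ihq =>
      have hstep : ((toEnd F L L x)^(j+1+1)) w = ⁅x, ((toEnd F L L x)^(j+1)) w⁆ := by
        rw [pow_succ', Module.End.mul_apply, toEnd_apply_apply]
      rw [hstep, leibniz_lie h x _, hx, ihq, lie_smul, smul_lie, ← hstep]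
      push_cast
      match_scalars <;> ring
  have hqz : ∃ J, ((toEnd F L L x)^(J+1)) w = 0 := by
    have hcinj : Function.Injective (fun j : ℕ ↦ μ + 2*(((j+1 : ℕ)):F)) := by
      intro a b hab
      simp only at hab
      have h2 : ((a:F)) = b := by push_cast at hab; linear_combination (1/2 : F) * hab
      exact_mod_cast h2
    have heig : ∀ j : ℕ, (toEnd F L L h) (((toEnd F L L x)^(j+1)) w)
        = (μ + 2*(((j+1 : ℕ)):F)) • ((toEnd F L L x)^(j+1)) w := by
      intro j
      rw [toEnd_apply_apply]
      exact hq_eig j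
    exact eigen_chain_eventually_zero _ _ hcinj _ heig
  obtain ⟨J, hJ⟩ := hqz
  -- correction chain
  have hcorr : ∀ j : ℕ, ∃ (u' : L) (β : F), (⁅h, u'⁆ - μ • u' = s) ∧
      ⁅x, u'⁆ = β • ((toEnd F L L y)^j) (((toEnd F L L x)^(j+1)) w) := by
    intro j
    induction j with
    | zero =>
      refine ⟨w, 1, rfl, ?_⟩
      simp [toEnd_apply_apply]
    | succ j ihc =>
      obtain ⟨u', β, hu1, hu2⟩ := ihc
      set q := ((toEnd F L L x)^(j+1)) w with hqdef
      have hq : ⁅h, q⁆ = (μ + 2*(((j+1 : ℕ)):F)) • q := hq_eig j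
      have hq' : ⁅x, q⁆ = ((toEnd F L L x)^(j+1+1)) w := by
        rw [pow_succ', Module.End.mul_apply, toEnd_apply_apply]
      have hcne : ((((j:ℕ):F))+1) * ((μ + 2*(((j+1 : ℕ)):F)) - ((j:ℕ):F)) ≠ 0 := by
        rw [hn]
        have e1 : (((j:ℕ):F))+1 ≠ 0 := by
          have : (((j+1 : ℕ)):F) ≠ 0 := Nat.cast_ne_zero.mpr (Nat.succ_ne_zero j)
          push_cast at this; exact this
        have e2 : (((n:ℕ):F) + 2*(((j+1 : ℕ)):F)) - ((j:ℕ):F) ≠ 0 := by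
          have : (((n + j + 2: ℕ)):F) ≠ 0 := Nat.cast_ne_zero.mpr (by omega)
          push_cast at this ⊢
          intro hcc
          apply this
          linear_combination hcc
        exact mul_ne_zero e1 e2
      set c := ((((j:ℕ):F))+1) * ((μ + 2*(((j+1 : ℕ)):F)) - ((j:ℕ):F)) with hcdef
      refine ⟨u' - (β/c) • ((toEnd F L L y)^(j+1)) q, -(β/c), ?_, ?_⟩
      · have hYq : ⁅h, ((toEnd F L L y)^(j+1)) q⁆ = μ • ((toEnd F L L y)^(j+1)) q := by
          have h5 := lie_h_pow_y hy hq (j+1)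
          have h6 : (μ + 2*(((j+1 : ℕ)):F)) - 2*(((j+1 : ℕ)):F) = μ := by ring
          rwa [h6] at h5
        rw [lie_sub, lie_smul, hYq, ← hu1]
        module
      · rw [lie_sub, lie_smul, hu2, lie_x_pow_y hy hxy hq hq' j, ← hcdef,
          smul_add, smul_smul, div_mul_cancel₀ β hcne]
        module
  obtain ⟨u', β, hu1, hu2⟩ := hcorr J
  rw [hJ, map_zero, smul_zero] at hu2
  refine no_gen_primitive hy hxy t n (hn ▸ prim) ?_ hu2
  rw [← hn, ← hu1]
  abel
lemma NJ_minus_one (hy : ⁅h, y⁆ = (-2 : F) • y) (hxy : ⁅x, y⁆ = h) (hx : ⁅h, x⁆ = (2 : F) • x)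
    (t : IsSl2Triple h x y) : NoJordan h (-1 : F) := by
  -- a weight with no eigenvectors at all
  have hbase : ∃ K : ℕ, ∀ z : L, ⁅h, z⁆ = (2*((K:ℕ):F) - 1) • z → z = 0 := by
    by_contra hno
    push_neg at hno
    choose f hf1 hf2 using hno
    have hcinj : Function.Injective (fun K : ℕ ↦ 2*((K:ℕ):F) - 1) := by
      intro a b hab
      simp only at hab
      have h2 : ((a:F)) = b := by linear_combination (1/2 : F) * hab
      exact_mod_cast h2
    obtain ⟨k, hk⟩ := eigen_chain_eventually_zero (toEnd F L L h) _ hcinj f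
      (fun k ↦ by rw [toEnd_apply_apply]; exact hf1 k)
    exact hf2 k hk
  obtain ⟨K, hK⟩ := hbase
  have hdesc : ∀ j : ℕ, j ≤ K → NoJordan h (2*(((K-j : ℕ)):F) - 1) := by
    intro j
    induction j with
    | zero =>
      intro _
      simp only [Nat.sub_zero]
      intro z hz
      exact sub_eq_zero.mp (hK _ hz)
    | succ j ih =>
      intro hj1
      have heq : 2*(((K-(j+1) : ℕ)):F) - 1 + 2 = 2*(((K-j : ℕ)):F) - 1 := by
        have hn2 : (K - j : ℕ) = (K - (j+1)) + 1 := by omega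
        rw [hn2]
        push_cast
        ring
      exact NJ_step hy hxy hx t _ (by rw [heq]; exact ih (by omega))
  have hfin := hdesc K le_rfl
  simp only [Nat.sub_self, Nat.cast_zero] at hfin
  have : (2*(0:F) - 1) = (-1 : F) := by norm_num
  rwa [this] at hfin

end


/-- if κ(gᵢ,gⱼ) = 0 for i+j ≠ 0, then the alternating form
κ₋₁(S,T) = κ(X,[S,T]) on g₋₁ is nondegenerate. -/
theorem kappa_minus_one_nondegenerate {F L : Type*} [Field F] [CharZero F]
    [LieRing L] [LieAlgebra F L] [Module.Finite F L]
    (κ : L →ₗ[F] L →ₗ[F] F)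
    (hsymm : ∀ z w, κ z w = κ w z)
    (hinv : ∀ z w u, κ ⁅z, w⁆ u = κ z ⁅w, u⁆)
    (hnd : ∀ z, (∀ w, κ z w = 0) → z = 0)
    (x h y : L)
    (hx : ⁅h, x⁆ = (2 : F) • x) (hy : ⁅h, y⁆ = (-2 : F) • y) (hxy : ⁅x, y⁆ = h)
    (horth : ∀ i j : ℤ, i + j ≠ 0 → ∀ z w : L,
      ⁅h, z⁆ = (i : F) • z → ⁅h, w⁆ = (j : F) • w → κ z w = 0) :
    ∀ S : L, ⁅h, S⁆ = (-1 : F) • S →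
      (∀ T : L, ⁅h, T⁆ = (-1 : F) • T → κ x ⁅S, T⁆ = 0) → S = 0 := by
  intro S hS hST
  by_cases hh : h = 0
  · rw [hh, zero_lie] at hS
    have : (-1 : F) • S = 0 := hS.symm
    simpa [neg_smul] using this
  have t : IsSl2Triple h x y := by
    refine ⟨hh, hxy, ?_, ?_⟩
    · rw [hx, two_smul, two_nsmul]
    · rw [hy, neg_smul, two_smul, two_nsmul]
  have hv : ⁅h, ⁅x, S⁆⁆ = ⁅x, S⁆ := by
    rw [leibniz_lie h x S, hx, hS, smul_lie, lie_smul]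
    module
  have NJ1 : NoJordan h (-1 : F) := NJ_minus_one hy hxy hx t
  set B : Module.End F L := LieModule.toEnd F L L h + 1 with hB
  have hBapp : ∀ w : L, B w = ⁅h, w⁆ + w := by
    intro w
    rw [hB]
    simp [LieModule.toEnd_apply_apply]
  have hKR : LinearMap.ker B ⊔ LinearMap.range B = ⊤ := by
    have hdisj : LinearMap.ker B ⊓ LinearMap.range B = ⊥ := by
      rw [Submodule.eq_bot_iff]
      rintro z ⟨hz1, w, rfl⟩
      have hz1' : ⁅h, B w⁆ = (-1 : F) • (B w) := by
        have : B (B w) = 0 := hz1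
        rw [hBapp (B w)] at this
        have h2 : ⁅h, B w⁆ = -(B w) := by
          rw [← sub_eq_zero]
          rw [← this]
          abel
        rw [h2]
        module
      have := NJ1 w ?_
      · show B w = 0
        rw [hBapp, this]
        module
      · have hBw : ⁅h, w⁆ - (-1 : F) • w = B w := by rw [hBapp]; module
        rw [hBw, hz1']
    apply Submodule.eq_top_of_finrank_eq
    have h1 := Submodule.finrank_sup_add_finrank_inf_eq (LinearMap.ker B) (LinearMap.range B)
    rw [hdisj] at h1
    simp only [finrank_bot, add_zero] at h1
    rw [h1, add_comm]
    exact LinearMap.finrank_range_add_finrank_ker B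
  have hfv : ∀ w, κ ⁅x, S⁆ w = 0 := by
    intro w
    have hw : w ∈ LinearMap.ker B ⊔ LinearMap.range B := by rw [hKR]; trivial
    obtain ⟨g, hg, r, hr, rfl⟩ := Submodule.mem_sup.mp hw
    obtain ⟨r', rfl⟩ := hr
    rw [map_add]
    have h1 : κ ⁅x, S⁆ g = 0 := by
      have hg' : ⁅h, g⁆ = (-1 : F) • g := by
        have : B g = 0 := hg
        rw [hBapp] at this
        rw [← sub_eq_zero, ← this]
        module
      rw [hinv x S g]
      exact hST g hg'
    have h2 : κ ⁅x, S⁆ (B r') = 0 := by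
      rw [hBapp, map_add]
      have h3 : κ ⁅x, S⁆ ⁅h, r'⁆ = κ ⁅⁅x, S⁆, h⁆ r' := (hinv ⁅x, S⁆ h r').symm
      have h4 : ⁅⁅x, S⁆, h⁆ = -⁅x, S⁆ := by rw [← lie_skew, hv]
      rw [h3, h4, map_neg, LinearMap.neg_apply]
      ring
    rw [h1, h2, add_zero]
  have hv0 : ⁅x, S⁆ = 0 := hnd _ hfv
  by_contra hS0
  have prim : t.HasPrimitiveVectorWith S (-1 : F) := ⟨hS0, hS, hv0⟩
  obtain ⟨n, hn⟩ := prim.exists_nat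
  have hbad : ((n+1 : ℕ) : F) = 0 := by push_cast; rw [← hn]; ring
  exact (Nat.cast_ne_zero.mpr (Nat.succ_ne_zero n)) hbad
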